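/- Let A ∈ ℝ^{p×p}, B ∈ ℝ^{p×m}, K₀ ∈ ℝ^{m×p}, and τ > 0. Suppose U : ℝ → ℝ^m is continuous, X : ℝ → ℝ^p is continuously differentiable, Ẋ(s) = A X(s) + B U(s − τ) holds for all s ≥ 0, and the predictor feedback U(t) = K₀ (e^{τA} X(t) + τ ∫₀¹ e^{τA(1−y)} B U(t − τ(1−y)) dy) holds for all t ≥ 0. Then U(t − τ) = K₀ X(t) for all t ≥ τ, and consequently Ẋ(t) = (A + B K₀) X(t) for all t ≥ τ; in particular, the closed-loop dynamics after time τ coincide exactly with the delay-free state feedback dynamics assigned by K₀. -/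

import Mathlib

open Set
open scoped Matrix

/-! By variation of constants on `[t - τ, t]`, rescaled to `[0, 1]`, the bracket in the feedback
law evaluated at time `t - τ` is exactly `X t`: the predictor is the state `τ` time units ahead.
Hence `U (t - τ) = K₀ X t`, and the delayed input in the plant becomes the state feedback `K₀ X`. -/

theorem HasDerivAt.matrix_mulVec {𝕜 : Type*} [NontriviallyNormedField 𝕜] {m n : Type*}
    [Fintype n] {M : 𝕜 → Matrix m n 𝕜} {M' : Matrix m n 𝕜} {v : 𝕜 → n → 𝕜} {v' : n → 𝕜}
    {t : 𝕜} (hM : HasDerivAt M M' t) (hv : HasDerivAt v v' t) :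
    HasDerivAt (fun s => M s *ᵥ v s) (M' *ᵥ v t + M t *ᵥ v') t := by
  refine hasDerivAt_pi.2 fun i => ?_
  have hMi : ∀ j, HasDerivAt (fun s => M s i j) (M' i j) t :=
    hasDerivAt_pi.1 (hasDerivAt_pi.1 hM i)
  simpa only [Matrix.mulVec, dotProduct, Pi.add_apply, ← Finset.sum_add_distrib] using
    HasDerivAt.fun_sum fun j _ => (hMi j).fun_mul (hasDerivAt_pi.1 hv j)

namespace Matrix

open NormedSpace

variable {n 𝕂 : Type*} [Fintype n] [DecidableEq n] [RCLike 𝕂]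

-- The operator norm induces the product topology on matrices, so the normed-algebra facts apply.
theorem hasDerivAt_exp_smul_const (A : Matrix n n 𝕂) (t : 𝕂) :
    HasDerivAt (fun u : 𝕂 => exp (u • A)) (exp (t • A) * A) t :=
  open scoped Matrix.Norms.Operator in _root_.hasDerivAt_exp_smul_const A t

theorem exp_add_smul (A : Matrix n n 𝕂) (a b : 𝕂) :
    exp ((a + b) • A) = exp (a • A) * exp (b • A) := by
  rw [add_smul]
  exact exp_add_of_commute _ _ (((Commute.refl A).smul_left a).smul_right b)

theorem exp_smul_mulVec_exp_smul_neg_mulVec (A : Matrix n n 𝕂)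
    (a b : 𝕂) (v : n → 𝕂) : exp (a • A) *ᵥ exp (b • -A) *ᵥ v = exp ((a - b) • A) *ᵥ v := by
  rw [smul_neg, ← neg_smul, mulVec_mulVec, ← exp_add_smul, ← sub_eq_add_neg]

theorem continuous_exp_smul_const (A : Matrix n n 𝕂) :
    Continuous fun u : 𝕂 => exp (u • A) :=
  open scoped Matrix.Norms.Operator in (differentiable_exp_smul_const 𝕂 A).continuous

theorem variation_of_constants {A : Matrix n n ℝ} {X f : ℝ → n → ℝ} {a b : ℝ}
    (hX : ∀ s ∈ uIcc a b, HasDerivAt X (A *ᵥ X s + f s) s) (hf : ContinuousOn f (uIcc a b)) :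
    X b = exp ((b - a) • A) *ᵥ X a + ∫ s in a..b, exp ((b - s) • A) *ᵥ f s := by
  have hderiv : ∀ s ∈ uIcc a b, HasDerivAt (fun u => exp (u • -A) *ᵥ X u)
      (exp (s • -A) *ᵥ f s) s := by
    intro s hs
    convert (hasDerivAt_exp_smul_const (-A) s).matrix_mulVec (hX s hs) using 1
    rw [mulVec_add, mulVec_mulVec, mul_neg, neg_mulVec, neg_add_cancel_left]
  have hint : IntervalIntegrable (fun s => exp (s • -A) *ᵥ f s) MeasureTheory.volume a b :=
    ((continuous_fst.matrix_mulVec continuous_snd).comp_continuousOn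
      ((continuous_exp_smul_const (-A)).continuousOn.prodMk hf)).intervalIntegrable
  let L := (mulVecLin (exp (b • A))).toContinuousLinearMap
  have hL : ∀ v, L v = exp (b • A) *ᵥ v := fun _ => rfl
  calc X b = L (exp (b • -A) *ᵥ X b) := by
        rw [hL, exp_smul_mulVec_exp_smul_neg_mulVec, sub_self, zero_smul, exp_zero, one_mulVec]
    _ = L (exp (a • -A) *ᵥ X a) + L (∫ s in a..b, exp (s • -A) *ᵥ f s) := by
      rw [intervalIntegral.integral_eq_sub_of_hasDerivAt hderiv hint, map_sub, add_sub_cancel]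
    _ = exp ((b - a) • A) *ᵥ X a + ∫ s in a..b, exp ((b - s) • A) *ᵥ f s := by
      simp only [← L.intervalIntegral_comp_comm hint, hL, exp_smul_mulVec_exp_smul_neg_mulVec]

theorem variation_of_constants_unitInterval {A : Matrix n n ℝ} {X f : ℝ → n → ℝ} {t τ : ℝ}
    (hX : ∀ s ∈ uIcc (t - τ) t, HasDerivAt X (A *ᵥ X s + f s) s)
    (hf : ContinuousOn f (uIcc (t - τ) t)) :
    X t = exp (τ • A) *ᵥ X (t - τ) +
      τ • ∫ y in (0 : ℝ)..1, exp ((τ * (1 - y)) • A) *ᵥ f (t - τ * (1 - y)) := by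
  have hrescale := intervalIntegral.smul_integral_comp_add_mul (a := 0) (b := 1)
    (fun s => exp ((t - s) • A) *ᵥ f s) τ (t - τ)
  rw [mul_zero, add_zero, mul_one, sub_add_cancel] at hrescale
  rw [variation_of_constants hX hf, sub_sub_cancel, ← hrescale]
  congr 2
  refine intervalIntegral.integral_congr fun y _ => ?_
  rw [show t - τ + τ * y = t - τ * (1 - y) by ring, sub_sub_cancel]

end Matrix

theorem predictor_feedback_closed_loop
    (p m : ℕ) (A : Matrix (Fin p) (Fin p) ℝ) (B : Matrix (Fin p) (Fin m) ℝ)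
    (K₀ : Matrix (Fin m) (Fin p) ℝ) (τ : ℝ) (hτ : 0 < τ)
    (U : ℝ → Fin m → ℝ) (hU : Continuous U)
    (X : ℝ → Fin p → ℝ)
    (hX : ∀ s : ℝ, 0 ≤ s →
      HasDerivAt X (A.mulVec (X s) + B.mulVec (U (s - τ))) s)
    (hfeedback : ∀ t : ℝ, 0 ≤ t →
      U t = K₀.mulVec ((NormedSpace.exp (τ • A)).mulVec (X t) +
        τ • ∫ y in (0:ℝ)..1,
          (NormedSpace.exp ((τ * (1 - y)) • A)).mulVec
            (B.mulVec (U (t - τ * (1 - y)))))) :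
    (∀ t : ℝ, τ ≤ t → U (t - τ) = K₀.mulVec (X t)) ∧
    (∀ t : ℝ, τ ≤ t → HasDerivAt X ((A + B * K₀).mulVec (X t)) t) := by
  have hdelay : ∀ t, τ ≤ t → U (t - τ) = K₀ *ᵥ X t := by
    intro t ht
    have hsolution : ∀ s ∈ uIcc (t - τ) t, HasDerivAt X (A *ᵥ X s + B *ᵥ U (s - τ)) s := by
      intro s hs
      rw [uIcc_of_le (by linarith)] at hs
      exact hX s (by linarith [hs.1])
    rw [hfeedback (t - τ) (by linarith), Matrix.variation_of_constants_unitInterval hsolution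
      (continuous_const.matrix_mulVec (hU.comp (continuous_sub_right τ))).continuousOn]
    congr 4 with y
    rw [sub_right_comm]
  refine ⟨hdelay, fun t ht => ?_⟩
  rw [Matrix.add_mulVec, ← Matrix.mulVec_mulVec, ← hdelay t ht]
  exact hX t (by linarith)
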